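/- arXiv:1108.2334 — 4 statements merged into one kernel-verified Lean document; each statement's English description precedes it below -/
import Mathlib

section
/- Suppose for every t, the conditional distribution of (x_{t+1}, ..., x_m) given (y_t, x_t) equals its conditional distribution given x_t alone (conditional independence of future covariates from the current response given the current covariate). Then the type II condition holds: E{∂_β μ_is(β)[y_ij − μ_ij(β)]} = 0 for all s ≥ j, where μ_ij(β) = E[y_ij | x_ij] and ∂_β μ_is(β) is a function of x_is only. -/
/-! Write `G` for the σ-algebra generated by the covariates after time `j`. The heart of the
matter is `E[y_j | 𝔪 j ⊔ G] = E[y_j | 𝔪 j]`. Sets `B ∩ C` with `B ∈ 𝔪 j`, `C ∈ G` form a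
π-system generating `𝔪 j ⊔ G`, so it suffices to compare integrals over them. Conditional
independence first yields the same identity with the roles of `G` and `σ(y_j)` swapped and `y_j`
replaced by an indicator, `E[1_C | 𝔪 j ⊔ σ(y_j)] = E[1_C | 𝔪 j]`; this lets `1_C` move past the
`σ(y_j)`-measurable factor `y_j` without approximating `y_j` by simple functions. For `s ≥ j`,
`f_s` is `𝔪 j ⊔ G`-measurable and pulls out of the conditional expectation, so
`E[f_s (y_j - μ_j)] = E[f_s E[y_j - μ_j | 𝔪 j ⊔ G]] = 0`. -/

open MeasureTheory ProbabilityTheory Set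

section

-- The sub-σ-algebras come before `mΩ`, so that `mΩ` is the instance behind `Measure Ω`.
variable {Ω : Type*} {m m' m₁ m₂ : MeasurableSpace Ω} {mΩ : MeasurableSpace Ω}

lemma isPiSystem_image2_inter (m₁ m₂ : MeasurableSpace Ω) :
    IsPiSystem (image2 (· ∩ ·) {s | MeasurableSet[m₁] s} {s | MeasurableSet[m₂] s}) := by
  rintro _ ⟨B₁, hB₁, C₁, hC₁, rfl⟩ _ ⟨B₂, hB₂, C₂, hC₂, rfl⟩ -
  exact ⟨B₁ ∩ B₂, hB₁.inter hB₂, C₁ ∩ C₂, hC₁.inter hC₂, inter_inter_inter_comm _ _ _ _⟩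

lemma sup_eq_generateFrom_image2_inter (m₁ m₂ : MeasurableSpace Ω) :
    m₁ ⊔ m₂ = MeasurableSpace.generateFrom
      (image2 (· ∩ ·) {s | MeasurableSet[m₁] s} {s | MeasurableSet[m₂] s}) := by
  refine le_antisymm (sup_le ?_ ?_) (MeasurableSpace.generateFrom_le ?_)
  · exact fun B hB ↦ .basic _ ⟨B, hB, univ, @MeasurableSet.univ _ m₂, inter_univ B⟩
  · exact fun C hC ↦ .basic _ ⟨univ, @MeasurableSet.univ _ m₁, C, hC, univ_inter C⟩
  · rintro _ ⟨B, hB, C, hC, rfl⟩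
    exact (le_sup_left (b := m₂) B hB).inter (le_sup_right (a := m₁) C hC)

lemma ae_eq_condExp_sup_of_setIntegral_inter_eq {E : Type*} [NormedAddCommGroup E]
    [NormedSpace ℝ E] [CompleteSpace E] (hm₁ : m₁ ≤ mΩ) (hm₂ : m₂ ≤ mΩ) {P : Measure Ω}
    [IsFiniteMeasure P] {f g : Ω → E} (hf : Integrable f P)
    (hg : StronglyMeasurable[m₁] g) (hgi : Integrable g P)
    (h : ∀ B C, MeasurableSet[m₁] B → MeasurableSet[m₂] C →
      ∫ x in B ∩ C, g x ∂P = ∫ x in B ∩ C, f x ∂P) :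
    g =ᵐ[P] P[f | m₁ ⊔ m₂] := by
  have hM : m₁ ⊔ m₂ ≤ mΩ := sup_le hm₁ hm₂
  refine ae_eq_condExp_of_forall_setIntegral_eq hM hf (fun _ _ _ ↦ hgi.integrableOn)
    (fun A hA hPA ↦ ?_) (hg.mono (le_sup_left (b := m₂))).aestronglyMeasurable
  clear hPA
  induction A, hA using MeasurableSpace.induction_on_inter
    (sup_eq_generateFrom_image2_inter m₁ m₂) (isPiSystem_image2_inter m₁ m₂) with
  | empty => simp
  | basic _ hA =>
    obtain ⟨B, hB, C, hC, rfl⟩ := hA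
    exact h B C hB hC
  | compl t ht iht =>
    have huniv := h univ univ .univ .univ
    rw [inter_univ, setIntegral_univ, setIntegral_univ] at huniv
    rw [setIntegral_compl (hM t ht) hgi, setIntegral_compl (hM t ht) hf, iht, huniv]
  | iUnion A hdisj hA ihA =>
    rw [integral_iUnion (fun i ↦ hM _ (hA i)) hdisj hgi.integrableOn,
      integral_iUnion (fun i ↦ hM _ (hA i)) hdisj hf.integrableOn]
    exact tsum_congr ihA

lemma indicator_apply_eq_mul_indicator_one (D : Set Ω) (g : Ω → ℝ) (x : Ω) :
    D.indicator g x = g x * D.indicator (fun _ ↦ (1 : ℝ)) x := by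
  by_cases hx : x ∈ D <;> simp [hx]

lemma MeasureTheory.Integrable.mul_indicator_one {P : Measure Ω} {g : Ω → ℝ}
    (hg : Integrable g P) {D : Set Ω} (hD : MeasurableSet D) :
    Integrable (g * D.indicator fun _ ↦ (1 : ℝ)) P :=
  (hg.indicator hD).congr (.of_forall (indicator_apply_eq_mul_indicator_one D g))

lemma setIntegral_inter_eq_setIntegral_mul_indicator {P : Measure Ω} {D : Set Ω}
    (hD : MeasurableSet D) (B : Set Ω) (g : Ω → ℝ) :
    ∫ x in B ∩ D, g x ∂P = ∫ x in B, g x * D.indicator (fun _ ↦ (1 : ℝ)) x ∂P := by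
  simp_rw [← setIntegral_indicator hD, indicator_apply_eq_mul_indicator_one D g]

lemma setIntegral_mul_condExp (hm : m ≤ mΩ) {P : Measure Ω} [IsFiniteMeasure P]
    {h f : Ω → ℝ} (hh : StronglyMeasurable[m] h) (hf : Integrable f P)
    (hhf : Integrable (h * f) P) {s : Set Ω} (hs : MeasurableSet[m] s) :
    ∫ x in s, h x * P[f | m] x ∂P = ∫ x in s, h x * f x ∂P := by
  refine .trans ?_ (setIntegral_condExp hm hhf hs)
  exact setIntegral_congr_ae (hm s hs)
    ((condExp_mul_of_stronglyMeasurable_left hh hhf hf).mono fun x hx _ ↦ hx.symm)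

section CondIndep

variable [StandardBorelSpace Ω] {P : Measure Ω} [IsFiniteMeasure P]

lemma condExp_indicator_ae_eq_condExp_sup_of_condIndep (hm' : m' ≤ mΩ) (hm₁ : m₁ ≤ mΩ)
    (hm₂ : m₂ ≤ mΩ) (hCI : CondIndep m' m₁ m₂ hm' P) {C : Set Ω} (hC : MeasurableSet[m₁] C) :
    P⟦C | m'⟧ =ᵐ[P] P⟦C | m' ⊔ m₂⟧ := by
  refine ae_eq_condExp_sup_of_setIntegral_inter_eq hm' hm₂
    ((integrable_const (1 : ℝ)).indicator (hm₁ C hC)) stronglyMeasurable_condExp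
    integrable_condExp fun B D hB hD ↦ ?_
  have hD' := hm₂ D hD
  have h1D : Integrable (D.indicator fun _ ↦ (1 : ℝ)) P := (integrable_const 1).indicator hD'
  have hfac := (condIndep_iff m' m₁ m₂ hm' hm₁ hm₂ P).1 hCI C D hC hD
  calc ∫ x in B ∩ D, (P⟦C | m'⟧) x ∂P
      = ∫ x in B, (P⟦C | m'⟧) x * D.indicator (fun _ ↦ 1) x ∂P :=
        setIntegral_inter_eq_setIntegral_mul_indicator hD' B _
    _ = ∫ x in B, (P⟦C | m'⟧) x * (P⟦D | m'⟧) x ∂P :=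
        (setIntegral_mul_condExp hm' stronglyMeasurable_condExp h1D
          (integrable_condExp.mul_indicator_one hD') hB).symm
    _ = ∫ x in B, (P⟦C ∩ D | m'⟧) x ∂P :=
        setIntegral_congr_ae (hm' B hB) (hfac.mono fun x hx _ ↦ hx.symm)
    _ = ∫ x in B, (C ∩ D).indicator (fun _ ↦ (1 : ℝ)) x ∂P :=
        setIntegral_condExp hm' ((integrable_const 1).indicator ((hm₁ C hC).inter hD')) hB
    _ = ∫ x in B ∩ D, C.indicator (fun _ ↦ (1 : ℝ)) x ∂P := by
        rw [inter_comm C, ← indicator_indicator, setIntegral_indicator hD']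

lemma condExp_ae_eq_condExp_sup_of_condIndep (hm' : m' ≤ mΩ) (hm₁ : m₁ ≤ mΩ) (hm₂ : m₂ ≤ mΩ)
    (hCI : CondIndep m' m₁ m₂ hm' P) {y : Ω → ℝ} (hy : Integrable y P)
    (hym : StronglyMeasurable[m₂] y) :
    P[y | m'] =ᵐ[P] P[y | m' ⊔ m₁] := by
  refine ae_eq_condExp_sup_of_setIntegral_inter_eq hm' hm₁ hy stronglyMeasurable_condExp
    integrable_condExp fun B C hB hC ↦ ?_
  have hC' := hm₁ C hC
  have h1C : Integrable (C.indicator fun _ ↦ (1 : ℝ)) P := (integrable_const 1).indicator hC'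
  have hbdd : ∀ᵐ x ∂P, ‖(P⟦C | m'⟧) x‖ ≤ 1 := by
    simp_rw [Real.norm_eq_abs]
    refine ae_bdd_abs_condExp_of_ae_bdd_abs (.of_forall fun x ↦ ?_)
    by_cases hx : x ∈ C <;> simp [hx]
  calc ∫ x in B ∩ C, P[y | m'] x ∂P
      = ∫ x in B, P[y | m'] x * (P⟦C | m'⟧) x ∂P := by
        rw [setIntegral_inter_eq_setIntegral_mul_indicator hC',
          setIntegral_mul_condExp hm' stronglyMeasurable_condExp h1C
            (integrable_condExp.mul_indicator_one hC') hB]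
    _ = ∫ x in B, (P⟦C | m'⟧) x * y x ∂P := by
        simp_rw [mul_comm (P[y | m'] _)]
        exact setIntegral_mul_condExp hm' stronglyMeasurable_condExp hy
          (hy.bdd_mul integrable_condExp.aestronglyMeasurable hbdd) hB
    _ = ∫ x in B, (P⟦C | m' ⊔ m₂⟧) x * y x ∂P :=
        setIntegral_congr_ae (hm' B hB)
          ((condExp_indicator_ae_eq_condExp_sup_of_condIndep hm' hm₁ hm₂ hCI hC).mono
            fun x hx _ ↦ by rw [hx])
    _ = ∫ x in B ∩ C, y x ∂P := by
        simp_rw [mul_comm _ (y _)]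
        rw [setIntegral_inter_eq_setIntegral_mul_indicator hC',
          setIntegral_mul_condExp (sup_le hm' hm₂) (hym.mono le_sup_right) h1C
            (hy.mul_indicator_one hC') (le_sup_left (b := m₂) B hB)]

end CondIndep

lemma integral_mul_sub_eq_zero_of_ae_eq_condExp (hm : m ≤ mΩ) {P : Measure Ω}
    [IsFiniteMeasure P] {f g g' : Ω → ℝ} (hf : StronglyMeasurable[m] f) (hg : Integrable g P)
    (hg' : g' =ᵐ[P] P[g | m]) (hfg : Integrable (fun ω ↦ f ω * (g ω - g' ω)) P) :
    ∫ ω, f ω * (g ω - g' ω) ∂P = 0 := by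
  have hg'i : Integrable g' P := integrable_condExp.congr hg'.symm
  have hsub : Integrable (g - g') P := hg.sub hg'i
  have hzero : P[g - g' | m] =ᵐ[P] 0 := by
    have hg'm : P[g' | m] =ᵐ[P] P[g | m] :=
      (condExp_congr_ae hg').trans (condExp_condExp_of_le le_rfl hm)
    filter_upwards [condExp_sub hg hg'i m, hg'm] with x hx_sub hx_g'
    simp [hx_sub, hx_g']
  calc ∫ ω, f ω * (g ω - g' ω) ∂P
      = ∫ ω, P[f * (g - g') | m] ω ∂P := (integral_condExp hm).symm
    _ = ∫ ω, f ω * P[g - g' | m] ω ∂P :=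
        integral_congr_ae (condExp_mul_of_stronglyMeasurable_left hf hfg hsub)
    _ = ∫ ω, f ω * 0 ∂P := integral_congr_ae (hzero.mono fun x hx ↦ congrArg (f x * ·) hx)
    _ = 0 := by simp

end

/-- The hypothesis on conditional distributions is encoded as conditional independence, given
`𝔪 t`, of the future covariates and `y t`; `f s` stands for `∂_β μ_s(β)`. -/
theorem typeII_condition_of_condIndep
    {Ω : Type*} {mΩ : MeasurableSpace Ω} [StandardBorelSpace Ω]
    (P : Measure Ω) [IsProbabilityMeasure P]
    (m : ℕ) (𝔪 : Fin m → MeasurableSpace Ω) (h𝔪 : ∀ j, 𝔪 j ≤ mΩ)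
    (y : Fin m → Ω → ℝ) (hy : ∀ j, Integrable (y j) P) (hymeas : ∀ j, Measurable (y j))
    (μvec : Fin m → Ω → ℝ) (hμ : ∀ j, μvec j =ᵐ[P] P[y j | 𝔪 j])
    (hCI : ∀ t : Fin m,
      CondIndep (𝔪 t) (⨆ s : {s : Fin m // t < s}, 𝔪 s)
        (MeasurableSpace.comap (y t) (borel ℝ)) (h𝔪 t) P)
    (f : Fin m → Ω → ℝ) (hf : ∀ s, StronglyMeasurable[𝔪 s] (f s))
    (hint : ∀ s j, Integrable (fun ω => f s ω * (y j ω - μvec j ω)) P) :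
    ∀ s j : Fin m, j ≤ s → ∫ ω, f s ω * (y j ω - μvec j ω) ∂P = 0 := by
  intro s j hjs
  set G := ⨆ t : {t : Fin m // j < t}, 𝔪 t
  have hG : G ≤ mΩ := iSup_le fun t ↦ h𝔪 t
  have hfs : StronglyMeasurable[𝔪 j ⊔ G] (f s) := by
    rcases hjs.eq_or_lt with rfl | hlt
    · exact (hf j).mono le_sup_left
    · exact (hf s).mono
        ((le_iSup (fun t : {t : Fin m // j < t} ↦ 𝔪 t) ⟨s, hlt⟩).trans le_sup_right)
  have hμ_sup : μvec j =ᵐ[P] P[y j | 𝔪 j ⊔ G] :=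
    (hμ j).trans (condExp_ae_eq_condExp_sup_of_condIndep (h𝔪 j) hG (hymeas j).comap_le
      (hCI j) (hy j) (comap_measurable (y j)).stronglyMeasurable)
  exact integral_mul_sub_eq_zero_of_ae_eq_condExp (sup_le (h𝔪 j) hG) hfs (hy j) hμ_sup
    (hint s j)
end

section
/- Under the type II condition E{∂_{β_l} μ_s(β)(y_j − μ_j(β))} = 0 for all s ≥ j, for any lower triangular m×m matrix L the estimating function D(β)^T L [y − μ(β)] has expectation zero, where D(β) is the m×p matrix with rows ∂_β μ_s(β)^T. -/
/-!
Expectation commutes with the constant matrices `Dᵀ` and `L`, so the expected estimating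
function is `Dᵀ L e` with `e = E[y - μ]`. Its `l`-th entry is `∑ s j, D s l * L s j * e j`;
the terms with `s < j` vanish because `L` is lower triangular, and those with `j ≤ s` by the
type II condition.
-/

open MeasureTheory Matrix

section Algebra

variable {R m n : Type*} [CommSemiring R] [Fintype m] [LinearOrder m]

theorem Matrix.transpose_mulVec_mulVec_apply_eq_zero_of_blockTriangular
    {D : Matrix m n R} {L : Matrix m m R} (hL : L.BlockTriangular OrderDual.toDual)
    {e : m → R} {l : n} (he : ∀ s j, j ≤ s → D s l * e j = 0) :
    (Dᵀ *ᵥ (L *ᵥ e)) l = 0 := by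
  simp only [mulVec, dotProduct, transpose_apply, Finset.mul_sum]
  refine Finset.sum_eq_zero fun s _ => Finset.sum_eq_zero fun j _ => ?_
  rcases le_or_gt j s with hjs | hsj
  · rw [mul_left_comm, he s j hjs, mul_zero]
  · rw [hL hsj, zero_mul, mul_zero]

end Algebra

namespace MeasureTheory

variable {Ω m n : Type*} [MeasurableSpace Ω] {P : Measure Ω} [Fintype m] [Fintype n]
  {f : Ω → n → ℝ}

theorem Integrable.mulVec (hf : Integrable f P) (A : Matrix m n ℝ) :
    Integrable (fun ω => A *ᵥ f ω) P :=
  (LinearMap.toContinuousLinearMap A.mulVecLin).integrable_comp hf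

theorem integral_mulVec (hf : Integrable f P) (A : Matrix m n ℝ) :
    ∫ ω, A *ᵥ f ω ∂P = A *ᵥ ∫ ω, f ω ∂P :=
  (LinearMap.toContinuousLinearMap A.mulVecLin).integral_comp_comm hf

end MeasureTheory

/-- Under the type II condition `E{∂_β μ_s(β)(y_j − μ_j(β))} = 0` for all `s ≥ j`,
for any lower triangular `m×m` matrix `L` the estimating function `D(β)ᵀ L [y − μ(β)]`
has expectation zero, where `D(β)` has rows `∂_β μ_s(β)ᵀ`. -/
theorem typeII_lower_triangular_unbiased
    {Ω : Type*} [MeasurableSpace Ω] (P : Measure Ω) [IsProbabilityMeasure P]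
    (m p : ℕ) (y : Ω → (Fin m → ℝ)) (μvec : Fin m → ℝ)
    (Dmat : Matrix (Fin m) (Fin p) ℝ)
    (L : Matrix (Fin m) (Fin m) ℝ) (hL : ∀ j k : Fin m, j < k → L j k = 0)
    (hint : ∀ j : Fin m, Integrable (fun ω => y ω j) P)
    (htypeII : ∀ (s j : Fin m), j ≤ s → ∀ l : Fin p,
      ∫ ω, Dmat s l * (y ω j - μvec j) ∂P = 0) :
    ∀ l : Fin p, ∫ ω, (Dmat.transpose *ᵥ (L *ᵥ (y ω - μvec))) l ∂P = 0 := by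
  intro l
  have hres : Integrable (fun ω => y ω - μvec) P :=
    (Integrable.of_eval hint).sub (integrable_const μvec)
  have hmean : ∀ s j, j ≤ s → Dmat s l * (∫ ω, y ω - μvec ∂P) j = 0 := fun s j hjs => by
    rw [eval_integral hres.eval, ← integral_const_mul]
    exact htypeII s j hjs l
  rw [← eval_integral ((hres.mulVec L).mulVec Dmatᵀ).eval, integral_mulVec (hres.mulVec L),
    integral_mulVec hres]
  exact transpose_mulVec_mulVec_apply_eq_zero_of_blockTriangular (fun i j h => hL i j h) hmean
end

section
/- Let g_1, ..., g_m ∈ R^r and consider minimizing Σ_{i=1}^m p_i log(m p_i) over probability vectors (p_1, ..., p_m) with p_i ≥ 0, Σ p_i = 1 and Σ p_i g_i = 0. If a minimizer with all p_i > 0 exists, then it has the exponential tilting form p_i = exp(t^T g_i) / Σ_j exp(t^T g_j) for some t ∈ R^r; conversely, any p of this form satisfying the constraint Σ p_i g_i = 0 is a global minimizer (by convexity of the objective). -/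
/-!
The objective `F p = ∑ pᵢ log (m pᵢ)` is convex with gradient `log (m pᵢ) + 1`, and `p` has the
exponential tilting form exactly when `log (m pᵢ) = c + tᵀ gᵢ` is an affine function of `gᵢ`.

If `p > 0` is a minimizer, `p + ε u` stays feasible for small `|ε|` whenever `∑ uᵢ = 0` and
`∑ uᵢ gᵢ = 0`, so the derivative `∑ uᵢ log (m pᵢ)` vanishes on all such directions. A linear form
vanishing on the common kernel of finitely many linear forms is a combination of them (Lagrange
multipliers), which gives `c` and `t`.

Conversely, summing the tangent-line inequality of `x ↦ x log (m x)` gives Gibbs' inequality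
`∑ qᵢ log (m pᵢ) ≤ ∑ qᵢ log (m qᵢ)`, and for `log (m pᵢ) = c + tᵀ gᵢ` the left side equals `c`
for every feasible `q`, in particular for `q = p`.
-/

open Real Finset

section LinearAlgebra

variable {𝕜 ι κ : Type*} [Field 𝕜] [Fintype ι] [Fintype κ]

theorem exists_eq_dotProduct_of_forall_sum_smul_eq_zero [DecidableEq ι] (G : ι → κ → 𝕜)
    (w : ι → 𝕜) (h : ∀ u : ι → 𝕜, ∑ i, u i • G i = 0 → ∑ i, u i * w i = 0) :
    ∃ t : κ → 𝕜, ∀ i, w i = t ⬝ᵥ G i := by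
  have hker : ⨅ k, LinearMap.ker (Fintype.linearCombination 𝕜 (G · k)) ≤
      LinearMap.ker (Fintype.linearCombination 𝕜 w) := by
    intro u hu
    simp only [Submodule.mem_iInf, LinearMap.mem_ker, Fintype.linearCombination_apply,
      smul_eq_mul] at hu ⊢
    exact h u (funext fun k => by simpa [Finset.sum_apply] using hu k)
  obtain ⟨t, ht⟩ :=
    (Submodule.mem_span_range_iff_exists_fun 𝕜).1 (mem_span_of_iInf_ker_le_ker hker)
  refine ⟨t, fun i => ?_⟩
  have := LinearMap.congr_fun ht (Pi.single i 1)
  simpa [Fintype.linearCombination_apply_single, dotProduct, eq_comm] using this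

theorem exists_eq_const_add_dotProduct_of_forall_sum_smul_eq_zero (g : ι → κ → 𝕜) (w : ι → 𝕜)
    (h : ∀ u : ι → 𝕜, ∑ i, u i = 0 → ∑ i, u i • g i = 0 → ∑ i, u i * w i = 0) :
    ∃ (c : 𝕜) (t : κ → 𝕜), ∀ i, w i = c + t ⬝ᵥ g i := by
  classical
  obtain ⟨t, ht⟩ := exists_eq_dotProduct_of_forall_sum_smul_eq_zero
    (fun i (o : Option κ) => o.elim 1 (g i)) w fun u hu => by
      refine h u (by simpa using congr_fun hu none) (funext fun k => ?_)
      simpa [Finset.sum_apply] using congr_fun hu (some k)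
  exact ⟨t none, (t ∘ some), fun i => by simpa [dotProduct, Fintype.sum_option] using ht i⟩

end LinearAlgebra

section Entropy

variable {ι : Type*} [Fintype ι]

theorem mul_log_mul_add_sub_le {a p q : ℝ} (ha : 0 < a) (hp : 0 < p) (hq : 0 ≤ q) :
    q * log (a * p) + (q - p) ≤ q * log (a * q) := by
  rcases hq.eq_or_lt with rfl | hq
  · simpa using hp.le
  have hlog : log (a * q) = log (a * p) + log (q / p) := by
    rw [← log_mul (by positivity) (by positivity)]
    congr 1
    field_simp
  have hgibbs : 1 - p / q ≤ log (q / p) := by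
    simpa using one_sub_inv_le_log_of_pos (div_pos hq hp)
  calc q * log (a * p) + (q - p) = q * log (a * p) + q * (1 - p / q) := by field_simp
    _ ≤ q * log (a * p) + q * log (q / p) := by gcongr
    _ = q * log (a * q) := by rw [hlog]; ring

theorem sum_mul_log_mul_le_sum_mul_log_mul {a : ℝ} {p q : ι → ℝ} (ha : 0 < a)
    (hp : ∀ i, 0 < p i) (hq : ∀ i, 0 ≤ q i) (hpq : ∑ i, p i = ∑ i, q i) :
    ∑ i, q i * log (a * p i) ≤ ∑ i, q i * log (a * q i) := by
  have := sum_le_sum fun i (_ : i ∈ univ) => mul_log_mul_add_sub_le ha (hp i) (hq i)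
  rwa [sum_add_distrib, sum_sub_distrib, hpq, sub_self, add_zero] at this

theorem hasDerivAt_sum_mul_log_mul_add_mul {a : ℝ} {p : ι → ℝ} (ha : a ≠ 0) (hp : ∀ i, p i ≠ 0)
    (u : ι → ℝ) :
    HasDerivAt (fun ε : ℝ => ∑ i, (p i + ε * u i) * log (a * (p i + ε * u i)))
      (∑ i, u i * (log (a * p i) + 1)) 0 := by
  refine HasDerivAt.fun_sum fun i _ => ?_
  have hline : HasDerivAt (fun ε : ℝ => a * (p i + ε * u i)) (a * u i) 0 := by
    simpa using ((hasDerivAt_id (0 : ℝ)).mul_const (u i)).const_add (p i) |>.const_mul a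
  have hmul_log := (Real.hasDerivAt_mul_log (by simpa using mul_ne_zero ha (hp i))).comp 0 hline
  have hscaled := (hmul_log.const_mul a⁻¹).congr_of_eventuallyEq
    (f₁ := fun ε : ℝ => (p i + ε * u i) * log (a * (p i + ε * u i)))
    (.of_forall fun ε => by simp only [Function.comp_apply]; field_simp)
  convert hscaled using 1
  simp only [zero_mul, add_zero]
  field_simp

theorem sum_mul_log_mul_eq_zero_of_isMinOn {κ : Type*} [Fintype κ] {a : ℝ} {p u : ι → ℝ}
    {g : ι → κ → ℝ} (ha : a ≠ 0) (hp : ∀ i, 0 < p i)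
    (hpS : p ∈ stdSimplex ℝ ι ∩ {q | ∑ i, q i • g i = 0})
    (hmin : IsMinOn (fun q => ∑ i, q i * log (a * q i))
      (stdSimplex ℝ ι ∩ {q | ∑ i, q i • g i = 0}) p)
    (hu1 : ∑ i, u i = 0) (hug : ∑ i, u i • g i = 0) :
    ∑ i, u i * log (a * p i) = 0 := by
  obtain ⟨⟨-, hp1⟩, hpg : ∑ i, p i • g i = 0⟩ := hpS
  have hfeasible : ∀ᶠ ε in nhds (0 : ℝ), ∀ i, 0 ≤ p i + ε * u i :=
    Filter.eventually_all.2 fun i =>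
      (continuousAt_const.eventually_lt
        (by fun_prop : Continuous fun ε : ℝ => p i + ε * u i).continuousAt
        (by simpa using hp i)).mono fun _ h => h.le
  have hlocal : IsLocalMin (fun ε : ℝ => ∑ i, (p i + ε * u i) * log (a * (p i + ε * u i))) 0 :=
    hfeasible.mono fun ε hε => by
      simpa using isMinOn_iff.1 hmin _
        ⟨⟨hε, by simp [sum_add_distrib, ← mul_sum, hp1, hu1]⟩,
          by simp [add_smul, sum_add_distrib, mul_smul, ← smul_sum, hpg, hug]⟩
  have := hlocal.hasDerivAt_eq_zero (hasDerivAt_sum_mul_log_mul_add_mul ha (fun i => (hp i).ne') u)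
  simpa [mul_add, sum_add_distrib, hu1] using this

end Entropy

section ExponentialTilting

variable {ι : Type*} [Fintype ι]

theorem sum_exp_pos (s : ι → ℝ) (i : ι) : 0 < ∑ j, exp (s j) :=
  sum_pos (fun j _ => exp_pos (s j)) ⟨i, mem_univ i⟩

theorem sum_exp_div_sum_exp [Nonempty ι] (s : ι → ℝ) : ∑ i, exp (s i) / ∑ j, exp (s j) = 1 := by
  rw [← sum_div, div_self (sum_exp_pos s (Classical.arbitrary ι)).ne']

theorem log_mul_exp_div_sum_exp {a : ℝ} (ha : 0 < a) (s : ι → ℝ) (i : ι) :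
    log (a * (exp (s i) / ∑ j, exp (s j))) = (log a - log (∑ j, exp (s j))) + s i := by
  rw [log_mul ha.ne' (div_pos (exp_pos _) (sum_exp_pos s i)).ne',
    log_div (exp_pos _).ne' (sum_exp_pos s i).ne', log_exp]
  ring

theorem eq_exp_div_sum_exp_of_log_mul_eq {a c : ℝ} {p s : ι → ℝ} (ha : 0 < a)
    (hp : ∀ i, 0 < p i) (hp1 : ∑ i, p i = 1) (h : ∀ i, log (a * p i) = c + s i) (i : ι) :
    p i = exp (s i) / ∑ j, exp (s j) := by
  have hp_exp : ∀ j, p j = exp c / a * exp (s j) := fun j => by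
    rw [div_mul_eq_mul_div, ← exp_add, ← h j, exp_log (mul_pos ha (hp j))]
    field_simp
  have hnorm : exp c / a * ∑ j, exp (s j) = 1 := by
    rw [mul_sum, ← hp1]
    exact sum_congr rfl fun j _ => (hp_exp j).symm
  rw [eq_div_iff (sum_exp_pos s i).ne', hp_exp i]
  linear_combination exp (s i) * hnorm

theorem sum_mul_eq_of_eq_const_add_dotProduct {κ : Type*} [Fintype κ] {q w : ι → ℝ} {c : ℝ}
    {t : κ → ℝ} {g : ι → κ → ℝ} (hq1 : ∑ i, q i = 1) (hqg : ∑ i, q i • g i = 0)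
    (hw : ∀ i, w i = c + t ⬝ᵥ g i) :
    ∑ i, q i * w i = c := by
  have hdot : ∑ i, q i * t ⬝ᵥ g i = t ⬝ᵥ ∑ i, q i • g i := by
    simp [dotProduct_sum, dotProduct_smul]
  simp only [hw, mul_add, sum_add_distrib, ← sum_mul, hq1, one_mul, hdot, hqg, dotProduct_zero,
    add_zero]

end ExponentialTilting

/-- Exponential-tilting duality: if a strictly positive minimizer of `∑ pᵢ log(m pᵢ)` over
the feasible set `{p : pᵢ ≥ 0, ∑ pᵢ = 1, ∑ pᵢ gᵢ = 0}` exists, it has the exponential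
tilting form `pᵢ = exp(tᵀgᵢ)/∑ⱼ exp(tᵀgⱼ)` for some `t ∈ ℝʳ`; conversely, any `p` of this
form satisfying the constraint `∑ pᵢ gᵢ = 0` is a global minimizer. -/
theorem etel_duality (m r : ℕ) (g : Fin m → (Fin r → ℝ)) :
    (∀ p : Fin m → ℝ, (∀ i, 0 < p i) → (∑ i, p i = 1) → (∑ i, p i • g i = 0) →
      (∀ q : Fin m → ℝ, (∀ i, 0 ≤ q i) → (∑ i, q i = 1) → (∑ i, q i • g i = 0) →
        ∑ i, p i * Real.log (m * p i) ≤ ∑ i, q i * Real.log (m * q i)) →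
      ∃ t : Fin r → ℝ, ∀ i, p i = Real.exp (t ⬝ᵥ g i) / ∑ j, Real.exp (t ⬝ᵥ g j)) ∧
    (∀ t : Fin r → ℝ, ∀ p : Fin m → ℝ,
      (∀ i, p i = Real.exp (t ⬝ᵥ g i) / ∑ j, Real.exp (t ⬝ᵥ g j)) →
      (∑ i, p i • g i = 0) →
      ∀ q : Fin m → ℝ, (∀ i, 0 ≤ q i) → (∑ i, q i = 1) → (∑ i, q i • g i = 0) →
        ∑ i, p i * Real.log (m * p i) ≤ ∑ i, q i * Real.log (m * q i)) := by
  have hm {q : Fin m → ℝ} (hq1 : ∑ i, q i = 1) : (0 : ℝ) < m :=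
    Nat.cast_pos.2 (Nat.pos_of_ne_zero fun h => by subst h; simp at hq1)
  refine ⟨fun p hp hp1 hpg hmin => ?_, fun t p hp hpg q hq hq1 hqg => ?_⟩
  · have hpmin : IsMinOn (fun q => ∑ i, q i * log (m * q i))
        (stdSimplex ℝ (Fin m) ∩ {q | ∑ i, q i • g i = 0}) p :=
      isMinOn_iff.2 fun q ⟨⟨hq, hq1⟩, hqg⟩ => hmin q hq hq1 hqg
    obtain ⟨c, t, hlog⟩ := exists_eq_const_add_dotProduct_of_forall_sum_smul_eq_zero g
      (fun i => log (m * p i)) fun u hu1 hug => sum_mul_log_mul_eq_zero_of_isMinOn (hm hp1).ne' hp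
        ⟨⟨fun i => (hp i).le, hp1⟩, hpg⟩ hpmin hu1 hug
    exact ⟨t, eq_exp_div_sum_exp_of_log_mul_eq (hm hp1) hp hp1 hlog⟩
  · have : Nonempty (Fin m) := Fin.pos_iff_nonempty.1 (by exact_mod_cast hm hq1)
    have hlog (i : Fin m) : log (m * p i) =
        (log m - log (∑ j, exp (t ⬝ᵥ g j))) + t ⬝ᵥ g i := by
      rw [hp i]; exact log_mul_exp_div_sum_exp (hm hq1) (fun j => t ⬝ᵥ g j) i
    have hp1 : ∑ i, p i = 1 := by simp_rw [hp]; exact sum_exp_div_sum_exp _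
    have hp_pos (i : Fin m) : 0 < p i := hp i ▸ div_pos (exp_pos _) (sum_exp_pos _ i)
    calc ∑ i, p i * log (m * p i)
        = log m - log (∑ j, exp (t ⬝ᵥ g j)) := sum_mul_eq_of_eq_const_add_dotProduct hp1 hpg hlog
      _ = ∑ i, q i * log (m * p i) := (sum_mul_eq_of_eq_const_add_dotProduct hq1 hqg hlog).symm
      _ ≤ ∑ i, q i * log (m * q i) :=
        sum_mul_log_mul_le_sum_mul_log_mul (hm hq1) hp_pos hq (hp1.trans hq1.symm)
end

section
/- The function t ↦ −Σ_{i=1}^{m} exp(−t^T g_i) on R^r (with g_1, ..., g_m ∈ R^r fixed) is concave, and if 0 lies in the interior of the convex hull of {g_1, ..., g_m}, the supremum is attained at a point t̂ satisfying Σ_i exp(−t̂^T g_i) g_i = 0. -/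
/-!
Each summand `exp (-(t ⬝ᵥ gᵢ))` is `exp` composed with a linear form, so `∑ᵢ exp (-(t ⬝ᵥ gᵢ))` is
convex. The map `y ↦ exp (-(t ⬝ᵥ y))` is convex too, so on `convexHull (range g)` it is bounded by
its values at the `gᵢ`, hence by the sum. If the hull contains the ball of radius `ε` about `0`,
testing with `y = ±(ε/2) • Pi.single j 1` gives `exp ((ε/2) |tⱼ|) ≤ ∑ᵢ exp (-(t ⬝ᵥ gᵢ))`: the sum
is coercive, so it attains its minimum, where its gradient `-∑ᵢ exp (-(t ⬝ᵥ gᵢ)) • gᵢ` vanishes.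
-/

open Matrix Filter Set Real

theorem convexOn_finsetSum {𝕜 E β ι : Type*} [Semiring 𝕜] [PartialOrder 𝕜] [AddCommMonoid E]
    [SMul 𝕜 E] [AddCommMonoid β] [PartialOrder β] [IsOrderedAddMonoid β] [Module 𝕜 β]
    {s : Set E} (hs : Convex 𝕜 s) (t : Finset ι) {f : ι → E → β}
    (hf : ∀ i ∈ t, ConvexOn 𝕜 s (f i)) : ConvexOn 𝕜 s fun x => ∑ i ∈ t, f i x := by
  classical
  induction t using Finset.induction_on with
  | empty => simpa using convexOn_const 0 hs
  | insert i t hi ih =>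
    simp only [Finset.sum_insert hi]
    exact (hf i (t.mem_insert_self i)).add (ih fun j hj => hf j (Finset.mem_insert_of_mem hj))

theorem tendsto_cocompact_atTop_of_forall_comp_abs_le {n : Type*} [Finite n] {f : (n → ℝ) → ℝ}
    {φ : ℝ → ℝ} (hφ : Tendsto φ atTop atTop) (hf : ∀ t j, φ |t j| ≤ f t) :
    Tendsto f (cocompact (n → ℝ)) atTop := by
  refine tendsto_atTop.2 fun c => ?_
  obtain ⟨R, hR⟩ := eventually_atTop.1 (hφ.eventually_ge_atTop c)
  refine mem_cocompact.2 ⟨univ.pi fun _ => Icc (-R) R, isCompact_univ_pi fun _ => isCompact_Icc,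
    fun t ht => ?_⟩
  obtain ⟨j, hj⟩ : ∃ j, t j ∉ Icc (-R) R := by
    simpa only [mem_compl_iff, Set.mem_pi, mem_univ, true_imp_iff, not_forall] using ht
  have hRj : R ≤ |t j| := (not_le.1 fun h => hj (abs_le.1 h)).le
  exact (hR _ hRj).trans (hf t j)

namespace Matrix

variable {n : Type*} [Fintype n]

noncomputable def dotProductRightCLM (w : n → ℝ) : (n → ℝ) →L[ℝ] ℝ :=
  LinearMap.toContinuousLinearMap ((dotProductBilin ℝ ℝ).flip w)

@[simp]
theorem dotProductRightCLM_apply (w v : n → ℝ) : dotProductRightCLM w v = v ⬝ᵥ w := rfl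

theorem dotProductRightCLM_sum {ι : Type*} (s : Finset ι) (c : ι → ℝ) (w : ι → n → ℝ) :
    dotProductRightCLM (∑ i ∈ s, c i • w i) = ∑ i ∈ s, c i • dotProductRightCLM (w i) := by
  ext v
  simp [dotProduct_sum, dotProduct_smul]

theorem convexOn_exp_neg_dotProduct (w : n → ℝ) :
    ConvexOn ℝ univ fun t : n → ℝ => exp (-(t ⬝ᵥ w)) :=
  convexOn_exp.comp_linearMap (-dotProductRightCLM w).toLinearMap

end Matrix

section ExpSum

variable {ι n : Type*} [Fintype ι] [Fintype n]

/-- `expSum g = -F`, the negated dual objective. -/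
noncomputable def expSum (g : ι → n → ℝ) (t : n → ℝ) : ℝ := ∑ i, exp (-(t ⬝ᵥ g i))

theorem convexOn_expSum (g : ι → n → ℝ) : ConvexOn ℝ univ (expSum g) :=
  convexOn_finsetSum convex_univ _ fun i _ => convexOn_exp_neg_dotProduct (g i)

theorem continuous_expSum (g : ι → n → ℝ) : Continuous (expSum g) :=
  continuous_finsetSum _ fun _ _ => (continuous_id.dotProduct continuous_const).neg.rexp

theorem hasFDerivAt_expSum (g : ι → n → ℝ) (t : n → ℝ) :
    HasFDerivAt (expSum g) (-dotProductRightCLM (∑ i, exp (-(t ⬝ᵥ g i)) • g i)) t := by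
  rw [dotProductRightCLM_sum, ← Finset.sum_neg_distrib]
  refine HasFDerivAt.fun_sum fun i _ => ?_
  simpa using ((dotProductRightCLM (g i)).hasFDerivAt (x := t)).neg.exp

theorem exp_neg_dotProduct_le_expSum {g : ι → n → ℝ} {y : n → ℝ}
    (hy : y ∈ convexHull ℝ (range g)) (t : n → ℝ) : exp (-(t ⬝ᵥ y)) ≤ expSum g t := by
  obtain ⟨_, ⟨i, rfl⟩, hi⟩ :=
    (convexOn_exp_neg_dotProduct t).exists_ge_of_mem_convexHull (subset_univ _) hy
  simp only [dotProduct_comm _ t] at hi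
  exact hi.trans <| Finset.single_le_sum (f := fun i => exp (-(t ⬝ᵥ g i)))
    (fun _ _ => (exp_pos _).le) (Finset.mem_univ i)

theorem exists_pos_exp_mul_abs_le_expSum {g : ι → n → ℝ}
    (h0 : (0 : n → ℝ) ∈ interior (convexHull ℝ (range g))) :
    ∃ δ > 0, ∀ t j, exp (δ * |t j|) ≤ expSum g t := by
  classical
  obtain ⟨ε, hε, hball⟩ := Metric.mem_nhds_iff.1 (mem_interior_iff_mem_nhds.1 h0)
  have key : ∀ t j a, |a| < ε → exp (-(t j * a)) ≤ expSum g t := fun t j a ha => by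
    rw [← dotProduct_single]
    exact exp_neg_dotProduct_le_expSum (hball (by simpa [Pi.norm_single] using ha)) t
  have hδ : |ε / 2| < ε := by rw [abs_of_pos (half_pos hε)]; linarith
  refine ⟨ε / 2, half_pos hε, fun t j => ?_⟩
  rcases abs_choice (t j) with h | h
  · simpa [h, mul_comm] using key t j (-(ε / 2)) (by rwa [abs_neg])
  · simpa [h, mul_comm] using key t j (ε / 2) hδ

theorem tendsto_expSum_cocompact {g : ι → n → ℝ}
    (h0 : (0 : n → ℝ) ∈ interior (convexHull ℝ (range g))) :
    Tendsto (expSum g) (cocompact (n → ℝ)) atTop := by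
  obtain ⟨δ, hδ, hle⟩ := exists_pos_exp_mul_abs_le_expSum h0
  exact tendsto_cocompact_atTop_of_forall_comp_abs_le
    (tendsto_exp_atTop.comp (tendsto_id.const_mul_atTop hδ)) hle

theorem sum_exp_smul_eq_zero_of_isMinOn {g : ι → n → ℝ} {t : n → ℝ}
    (ht : IsMinOn (expSum g) univ t) : ∑ i, exp (-(t ⬝ᵥ g i)) • g i = 0 := by
  set w := ∑ i, exp (-(t ⬝ᵥ g i)) • g i
  have h : dotProductRightCLM w = 0 :=
    neg_eq_zero.1 ((ht.isLocalMin univ_mem).hasFDerivAt_eq_zero (hasFDerivAt_expSum g t))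
  exact dotProduct_self_eq_zero.1 (DFunLike.congr_fun h w)

end ExpSum

/-- The dual objective `F(t) = −∑ᵢ exp(−tᵀgᵢ)` is concave on `ℝʳ`, and if `0` lies in the
interior of the convex hull of `{g₁, …, g_m}`, the supremum of `F` is attained at some `t̂`
satisfying the first-order condition `∑ᵢ exp(−t̂ᵀgᵢ) gᵢ = 0`. -/
theorem etel_dual_concave_attained (m r : ℕ) (g : Fin m → (Fin r → ℝ)) :
    ConcaveOn ℝ Set.univ (fun t : Fin r → ℝ => -∑ i, Real.exp (-(t ⬝ᵥ g i))) ∧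
    ((0 : Fin r → ℝ) ∈ interior (convexHull ℝ (Set.range g)) →
      ∃ that : Fin r → ℝ,
        IsMaxOn (fun t : Fin r → ℝ => -∑ i, Real.exp (-(t ⬝ᵥ g i))) Set.univ that ∧
        ∑ i, Real.exp (-(that ⬝ᵥ g i)) • g i = 0) := by
  refine ⟨(convexOn_expSum g).neg, fun h0 => ?_⟩
  obtain ⟨that, hle⟩ := (continuous_expSum g).exists_forall_le (tendsto_expSum_cocompact h0)
  have hmin : IsMinOn (expSum g) univ that := fun t _ => hle t
  exact ⟨that, hmin.neg, sum_exp_smul_eq_zero_of_isMinOn hmin⟩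
end
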